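/- For every n ≥ 1, the tree T ∈ 𝒯_n obtained by starting from the single-leaf tree and performing n-1 successive random grafting operations (each time choosing the pair (b,χ) uniformly among all possibilities) is uniformly distributed on 𝒯_n: Pr(T) = 1/(n-1)! for every T ∈ 𝒯_n. -/

import Mathlib

/-- A rooted plane (ordered) binary tree whose internal nodes carry natural-number labels. -/
inductive PTree : Type where
  | leaf : PTree
  | node (lab : ℕ) (l r : PTree) : PTree
deriving DecidableEq

/-- The size of a tree: its number of leaves. -/
def PTree.leaves : PTree → ℕ
  | .leaf => 1
  | .node _ l r => l.leaves + r.leaves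

/-- The list of labels of all internal nodes of a tree. -/
def PTree.labelList : PTree → List ℕ
  | .leaf => []
  | .node k l r => k :: (l.labelList ++ r.labelList)

/-- `t.incrFrom m`: every internal-node label of `t` exceeds `m` and labels strictly
increase along every path away from the root. -/
def PTree.incrFrom : ℕ → PTree → Prop
  | _, .leaf => True
  | m, .node k l r => m < k ∧ PTree.incrFrom k l ∧ PTree.incrFrom k r

/-- `IsOBIT n t`: `t` is an ordered binary increasing tree of size `n`. -/
def IsOBIT (n : ℕ) (t : PTree) : Prop :=
  t.leaves = n ∧ t.incrFrom 0 ∧ t.labelList.Perm (List.range' 1 (n - 1))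

/-- Apply a function to every internal-node label. -/
def PTree.relabel (f : ℕ → ℕ) : PTree → PTree
  | .leaf => .leaf
  | .node k l r => .node (f k) (l.relabel f) (r.relabel f)

/-- Insert a new internal node labeled `j` directly above subtree `x`, attaching a new
pendant leaf on the left (`χ = true`) or on the right (`χ = false`). -/
def graftNode (j : ℕ) (χ : Bool) (x : PTree) : PTree :=
  if χ then .node j .leaf x else .node j x .leaf

/-- Whether the root label of `t` exceeds `j` (a leaf counts as unbounded). -/
def PTree.rootGT (j : ℕ) : PTree → Bool
  | .leaf => true
  | .node m _ _ => decide (j < m)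

/-- Shift all labels `≥ j` up by one (making room for a new internal node labeled `j`). -/
def PTree.shiftFrom (j : ℕ) (t : PTree) : PTree :=
  t.relabel (fun m => if j ≤ m then m + 1 else m)

/-- Try to insert a new internal node labeled `j` (with a new pendant leaf on side `χ`) on
the branch segment of the (already shifted) tree reached by the path `p`: all labels along
the path must be `< j` and the subtree at the end of the path must have root label `> j`
(or be a leaf), i.e. the chosen branch crosses layer `j`. -/
def insertAt (j : ℕ) (χ : Bool) : PTree → List Bool → Option PTree
  | x, [] => if x.rootGT j then some (graftNode j χ x) else none
  | .node m l r, false :: p =>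
      if m < j then (insertAt j χ l p).map (fun l' => PTree.node m l' r) else none
  | .node m l r, true :: p =>
      if m < j then (insertAt j χ r p).map (fun r' => PTree.node m l r') else none
  | .leaf, _ :: _ => none

/-- The random grafting operation on `t ∈ 𝒯_k`: a choice of a branch segment of `t` —
encoded by its layer `j ∈ {1, …, k}` (layer `1` being the imaginary branch above the root)
and the path `p` to the branch crossing that layer — together with an orientation `χ`;
labels `≥ j` are shifted up by one, a new internal node labeled `j` is inserted on the
chosen segment and a new pendant leaf attached on side `χ`. For `t ∈ 𝒯_k` there are exactly
`k(k+1)` valid choices `(j, χ, p)`; invalid choices yield `none`. -/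
def graft (t : PTree) (j : ℕ) (χ : Bool) (p : List Bool) : Option PTree :=
  if 1 ≤ j ∧ j ≤ t.leaves then insertAt j χ (t.shiftFrom j) p else none

/-- Perform `m` successive grafting operations starting from the single-leaf tree, following
the sequence of grafting choices `c`; `none` if some choice is invalid. -/
def runGraft : (m : ℕ) → (Fin m → ℕ × Bool × List Bool) → Option PTree
  | 0, _ => some PTree.leaf
  | m + 1, c =>
      (runGraft m (fun i => c ⟨i.1, Nat.lt_succ_of_lt i.2⟩)).bind
        (fun t => graft t (c (Fin.last m)).1 (c (Fin.last m)).2.1 (c (Fin.last m)).2.2)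

namespace YuleAux

open PTree

/-! ### Basic lemmas on trees -/

lemma leaves_pos : ∀ t : PTree, 1 ≤ t.leaves
  | .leaf => le_refl 1
  | .node _ l r => by
      have := leaves_pos l; simp [PTree.leaves]; omega

lemma leaves_relabel (f : ℕ → ℕ) : ∀ t : PTree, (t.relabel f).leaves = t.leaves
  | .leaf => rfl
  | .node k l r => by
      simp [PTree.relabel, PTree.leaves, leaves_relabel f l, leaves_relabel f r]

lemma labelList_relabel (f : ℕ → ℕ) :
    ∀ t : PTree, (t.relabel f).labelList = t.labelList.map f
  | .leaf => rfl
  | .node k l r => by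
      simp [PTree.relabel, PTree.labelList, labelList_relabel f l, labelList_relabel f r]

lemma relabel_relabel (f g : ℕ → ℕ) :
    ∀ t : PTree, (t.relabel f).relabel g = t.relabel (g ∘ f)
  | .leaf => rfl
  | .node k l r => by
      simp [PTree.relabel, relabel_relabel f g l, relabel_relabel f g r]

lemma relabel_eq_self (f : ℕ → ℕ) :
    ∀ t : PTree, (∀ m ∈ t.labelList, f m = m) → t.relabel f = t
  | .leaf, _ => rfl
  | .node k l r, h => by
      simp only [PTree.labelList, List.mem_cons, List.mem_append] at h
      simp only [PTree.relabel]
      rw [h k (Or.inl rfl),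
        relabel_eq_self f l (fun m hm => h m (Or.inr (Or.inl hm))),
        relabel_eq_self f r (fun m hm => h m (Or.inr (Or.inr hm)))]

lemma incrFrom_mono {a b : ℕ} (hab : a ≤ b) : ∀ {t : PTree}, t.incrFrom b → t.incrFrom a
  | .leaf, _ => trivial
  | .node k l r, h => ⟨lt_of_le_of_lt hab h.1, h.2.1, h.2.2⟩

lemma incrFrom_lt_of_mem {a : ℕ} :
    ∀ {t : PTree}, t.incrFrom a → ∀ {j : ℕ}, j ∈ t.labelList → a < j
  | .leaf, _, _, hj => by simp [PTree.labelList] at hj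
  | .node k l r, h, j, hj => by
      simp only [PTree.labelList, List.mem_cons, List.mem_append] at hj
      rcases hj with rfl | hj | hj
      · exact h.1
      · exact lt_trans h.1 (incrFrom_lt_of_mem h.2.1 hj)
      · exact lt_trans h.1 (incrFrom_lt_of_mem h.2.2 hj)

lemma rootGT_of_incrFrom {a : ℕ} : ∀ {t : PTree}, t.incrFrom a → t.rootGT a = true
  | .leaf, _ => rfl
  | .node k l r, h => by simp [PTree.rootGT, h.1]

lemma incrFrom_of_rootGT {a j : ℕ} :
    ∀ {t : PTree}, t.incrFrom a → t.rootGT j = true → t.incrFrom j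
  | .leaf, _, _ => trivial
  | .node k l r, h, hgt => by
      simp only [PTree.rootGT, decide_eq_true_eq] at hgt
      exact ⟨hgt, h.2.1, h.2.2⟩

lemma incrFrom_relabel_reflect {f : ℕ → ℕ} (hf : ∀ x y, f x < f y → x < y) :
    ∀ {t : PTree} {a : ℕ}, (t.relabel f).incrFrom (f a) → t.incrFrom a
  | .leaf, _, _ => trivial
  | .node k l r, a, h => by
      obtain ⟨h1, h2, h3⟩ := h
      exact ⟨hf _ _ h1, incrFrom_relabel_reflect hf h2, incrFrom_relabel_reflect hf h3⟩

end YuleAux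

namespace YuleAux

/-! ### The inverse of `insertAt` -/

def delAt (j : ℕ) (χ : Bool) : PTree → List Bool → Option PTree
  | .leaf, _ => none
  | .node m l r, [] =>
      if m = j then
        if χ then (if l = .leaf ∧ r.rootGT j then some r else none)
        else (if r = .leaf ∧ l.rootGT j then some l else none)
      else none
  | .node m l r, false :: p =>
      if m < j then (delAt j χ l p).map (fun l' => PTree.node m l' r) else none
  | .node m l r, true :: p =>
      if m < j then (delAt j χ r p).map (fun r' => PTree.node m l r') else none

lemma delAt_nil_inv {j : ℕ} {χ : Bool} {T s : PTree} (h : delAt j χ T [] = some s) :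
    T = graftNode j χ s ∧ s.rootGT j = true := by
  cases T with
  | leaf => simp [delAt] at h
  | node m l r =>
      simp only [delAt] at h
      split_ifs at h with h1 h2 h3 h4
      · obtain ⟨rfl, hgt⟩ := h3
        obtain rfl : r = s := Option.some.inj h
        subst h1
        exact ⟨by simp [graftNode, h2], hgt⟩
      · obtain ⟨rfl, hgt⟩ := h4
        obtain rfl : l = s := Option.some.inj h
        subst h1
        exact ⟨by simp [graftNode, h2], hgt⟩

lemma delAt_cons_false_inv {j : ℕ} {χ : Bool} {T s : PTree} {p : List Bool}
    (h : delAt j χ T (false :: p) = some s) :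
    ∃ m l r l', T = .node m l r ∧ s = .node m l' r ∧ m < j ∧ delAt j χ l p = some l' := by
  cases T with
  | leaf => simp [delAt] at h
  | node m l r =>
      simp only [delAt] at h
      split_ifs at h with h1
      · rw [Option.map_eq_some_iff] at h
        obtain ⟨l', hl', rfl⟩ := h
        exact ⟨m, l, r, l', rfl, rfl, h1, hl'⟩

lemma delAt_cons_true_inv {j : ℕ} {χ : Bool} {T s : PTree} {p : List Bool}
    (h : delAt j χ T (true :: p) = some s) :
    ∃ m l r r', T = .node m l r ∧ s = .node m l r' ∧ m < j ∧ delAt j χ r p = some r' := by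
  cases T with
  | leaf => simp [delAt] at h
  | node m l r =>
      simp only [delAt] at h
      split_ifs at h with h1
      · rw [Option.map_eq_some_iff] at h
        obtain ⟨r', hr', rfl⟩ := h
        exact ⟨m, l, r, r', rfl, rfl, h1, hr'⟩

lemma delAt_to_insertAt {j : ℕ} {χ : Bool} :
    ∀ (p : List Bool) (T s : PTree), delAt j χ T p = some s → insertAt j χ s p = some T := by
  intro p
  induction p with
  | nil =>
      intro T s h
      obtain ⟨rfl, hgt⟩ := delAt_nil_inv h
      simp [insertAt, hgt]
  | cons b p ih =>
      intro T s h
      cases b with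
      | false =>
          obtain ⟨m, l, r, l', rfl, rfl, hm, hl'⟩ := delAt_cons_false_inv h
          simp [insertAt, hm, ih _ _ hl']
      | true =>
          obtain ⟨m, l, r, r', rfl, rfl, hm, hr'⟩ := delAt_cons_true_inv h
          simp [insertAt, hm, ih _ _ hr']

lemma insertAt_to_delAt {j : ℕ} {χ : Bool} :
    ∀ (p : List Bool) (s T : PTree), insertAt j χ s p = some T → delAt j χ T p = some s := by
  intro p
  induction p with
  | nil =>
      intro s T h
      simp only [insertAt] at h
      split at h
      · obtain rfl : graftNode j χ s = T := Option.some.inj h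
        cases χ with
        | true => simp [graftNode, delAt, ‹PTree.rootGT j s = true›]
        | false => simp [graftNode, delAt, ‹PTree.rootGT j s = true›]
      · exact absurd h (by simp)
  | cons b p ih =>
      intro s T h
      cases s with
      | leaf => cases b <;> simp [insertAt] at h
      | node m l r =>
          cases b with
          | false =>
              simp only [insertAt] at h
              split at h
              · rw [Option.map_eq_some_iff] at h
                obtain ⟨l', hl', rfl⟩ := h
                simp [delAt, ‹m < j›, ih _ _ hl']
              · exact absurd h (by simp)
          | true =>
              simp only [insertAt] at h
              split at h
              · rw [Option.map_eq_some_iff] at h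
                obtain ⟨r', hr', rfl⟩ := h
                simp [delAt, ‹m < j›, ih _ _ hr']
              · exact absurd h (by simp)

lemma delAt_leaves {j : ℕ} {χ : Bool} :
    ∀ (p : List Bool) (T s : PTree), delAt j χ T p = some s → T.leaves = s.leaves + 1 := by
  intro p
  induction p with
  | nil =>
      intro T s h
      obtain ⟨rfl, -⟩ := delAt_nil_inv h
      cases χ <;> simp [graftNode, PTree.leaves] <;> omega
  | cons b p ih =>
      intro T s h
      cases b with
      | false =>
          obtain ⟨m, l, r, l', rfl, rfl, hm, hl'⟩ := delAt_cons_false_inv h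
          simp [PTree.leaves, ih _ _ hl']; omega
      | true =>
          obtain ⟨m, l, r, r', rfl, rfl, hm, hr'⟩ := delAt_cons_true_inv h
          simp [PTree.leaves, ih _ _ hr']; omega

lemma delAt_labels {j : ℕ} {χ : Bool} :
    ∀ (p : List Bool) (T s : PTree), delAt j χ T p = some s →
      T.labelList.Perm (j :: s.labelList) := by
  intro p
  induction p with
  | nil =>
      intro T s h
      obtain ⟨rfl, -⟩ := delAt_nil_inv h
      cases χ <;> simp [graftNode, PTree.labelList]
  | cons b p ih =>
      intro T s h
      cases b with
      | false =>
          obtain ⟨m, l, r, l', rfl, rfl, hm, hl'⟩ := delAt_cons_false_inv h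
          have hperm := ih _ _ hl'
          simp only [PTree.labelList]
          refine (((hperm.append_right r.labelList)).cons m).trans ?_
          simp only [List.cons_append]
          exact List.Perm.swap j m _
      | true =>
          obtain ⟨m, l, r, r', rfl, rfl, hm, hr'⟩ := delAt_cons_true_inv h
          have hperm := ih _ _ hr'
          simp only [PTree.labelList]
          refine (((hperm.append_left l.labelList)).cons m).trans ?_
          refine ((List.perm_middle).cons m).trans ?_
          exact List.Perm.swap j m _

lemma delAt_incrFrom {j : ℕ} {χ : Bool} :
    ∀ (p : List Bool) (T s : PTree) (a : ℕ), delAt j χ T p = some s →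
      T.incrFrom a → a < j → s.incrFrom a := by
  intro p
  induction p with
  | nil =>
      intro T s a h hI haj
      obtain ⟨rfl, -⟩ := delAt_nil_inv h
      cases χ with
      | true => exact incrFrom_mono (le_of_lt haj) hI.2.2
      | false => exact incrFrom_mono (le_of_lt haj) hI.2.1
  | cons b p ih =>
      intro T s a h hI haj
      cases b with
      | false =>
          obtain ⟨m, l, r, l', rfl, rfl, hm, hl'⟩ := delAt_cons_false_inv h
          exact ⟨hI.1, ih _ _ _ hl' hI.2.1 hm, hI.2.2⟩
      | true =>
          obtain ⟨m, l, r, r', rfl, rfl, hm, hr'⟩ := delAt_cons_true_inv h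
          exact ⟨hI.1, hI.2.1, ih _ _ _ hr' hI.2.2 hm⟩

end YuleAux

namespace YuleAux

/-! ### Shifting and unshifting labels -/

def unshift (j : ℕ) (t : PTree) : PTree :=
  t.relabel (fun m => if j < m then m - 1 else m)

lemma unshift_shiftFrom (j : ℕ) (t : PTree) : unshift j (t.shiftFrom j) = t := by
  unfold unshift PTree.shiftFrom
  rw [relabel_relabel]
  exact relabel_eq_self _ t (fun m _ => by simp only [Function.comp]; split_ifs <;> omega)

lemma shiftFrom_unshift (j : ℕ) (s : PTree) (h : j ∉ s.labelList) :
    (unshift j s).shiftFrom j = s := by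
  unfold unshift PTree.shiftFrom
  rw [relabel_relabel]
  refine relabel_eq_self _ s (fun m hm => ?_)
  have : m ≠ j := fun hmj => h (hmj ▸ hm)
  simp only [Function.comp]
  split_ifs <;> omega

lemma map_pred_range' : ∀ (c a : ℕ), (List.range' (a + 1) c).map (fun x => x - 1) = List.range' a c
  | 0, _ => rfl
  | c + 1, a => by
      rw [List.range'_succ, List.range'_succ, List.map_cons, map_pred_range' c (a + 1)]
      simp

lemma leaves_unshift (j : ℕ) (s : PTree) : (unshift j s).leaves = s.leaves :=
  leaves_relabel _ s

/-- Characterization of `graft t j χ p = some T`. -/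
lemma graft_eq_some_iff {T : PTree} {j : ℕ} {χ : Bool} {p : List Bool}
    (hnd : T.labelList.Nodup)
    (hbound : ∀ x ∈ T.labelList, 1 ≤ x ∧ x < T.leaves) (t : PTree) :
    graft t j χ p = some T ↔ (delAt j χ T p).map (unshift j) = some t := by
  constructor
  · intro h
    unfold graft at h
    split_ifs at h with hj
    have hdel := insertAt_to_delAt p _ _ h
    rw [hdel, Option.map_some]
    rw [unshift_shiftFrom]
  · intro h
    rw [Option.map_eq_some_iff] at h
    obtain ⟨s, hs, rfl⟩ := h
    have hperm := delAt_labels p _ _ hs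
    have hjmem : j ∈ T.labelList := hperm.mem_iff.mpr (List.mem_cons_self)
    have hjb := hbound j hjmem
    have hnd2 : (j :: s.labelList).Nodup := hperm.nodup_iff.mp hnd
    have hjs : j ∉ s.labelList := (List.nodup_cons.mp hnd2).1
    have hlv := delAt_leaves p _ _ hs
    have hsl : (unshift j s).leaves = s.leaves := leaves_unshift j s
    unfold graft
    rw [if_pos ⟨hjb.1, by omega⟩, shiftFrom_unshift j s hjs]
    exact delAt_to_insertAt p _ _ hs

/-- The new tree after ungrafting is an OBIT of one smaller size. -/
lemma isOBIT_unshift_delAt {n : ℕ} (hn : 1 ≤ n) {T : PTree} (hT : IsOBIT (n + 1) T)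
    {j : ℕ} {χ : Bool} {p : List Bool} {s : PTree} (hs : delAt j χ T p = some s) :
    IsOBIT n (unshift j s) := by
  obtain ⟨hlv, hincr, hlab⟩ := hT
  have hperm := delAt_labels p _ _ hs
  have hjmem : j ∈ T.labelList := hperm.mem_iff.mpr (List.mem_cons_self)
  have hjrange : j ∈ List.range' 1 (n + 1 - 1) := hlab.mem_iff.mp hjmem
  rw [List.mem_range'] at hjrange
  obtain ⟨hj1, hj2⟩ : 1 ≤ j ∧ j ≤ n := by omega
  have hslv : s.leaves = n := by have := delAt_leaves p _ _ hs; omega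
  refine ⟨by rw [leaves_unshift, hslv], ?_, ?_⟩
  · -- increasing
    have hsincr : s.incrFrom 0 := delAt_incrFrom p _ _ 0 hs hincr hj1
    have hnd : T.labelList.Nodup := hlab.nodup_iff.mpr (List.nodup_range')
    have hjs : j ∉ s.labelList :=
      (List.nodup_cons.mp (hperm.nodup_iff.mp hnd)).1
    have hrefl : ∀ x y : ℕ, (if j ≤ x then x + 1 else x) < (if j ≤ y then y + 1 else y) → x < y := by
      intro x y; split_ifs <;> omega
    refine incrFrom_relabel_reflect hrefl (t := unshift j s) (a := 0) ?_
    show ((unshift j s).relabel _).incrFrom _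
    rw [show ((unshift j s).relabel fun m => if j ≤ m then m + 1 else m) = (unshift j s).shiftFrom j from rfl,
      shiftFrom_unshift j s hjs]
    rw [if_neg (show ¬ j ≤ 0 by omega)]
    exact hsincr
  · -- label permutation
    have hperm2 : (j :: s.labelList).Perm (List.range' 1 n) := by
      refine hperm.symm.trans (hlab.trans ?_)
      simp only [Nat.add_sub_cancel]
      exact List.Perm.refl _
    have hsplit : List.range' 1 n = List.range' 1 (j - 1) ++ j :: List.range' (j + 1) (n - j) := by
      have h1 : List.range' j (n - j + 1) = j :: List.range' (j + 1) (n - j) :=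
        List.range'_succ (s := j) (n := n - j) (step := 1)
      have h2 := List.range'_append (s := 1) (m := j - 1) (n := n - j + 1) (step := 1)
      rw [show 1 + 1 * (j - 1) = j by omega] at h2
      rw [show j - 1 + (n - j + 1) = n by omega] at h2
      rw [← h2, h1]
    have hsperm : s.labelList.Perm (List.range' 1 (j - 1) ++ List.range' (j + 1) (n - j)) := by
      have h3 : (j :: s.labelList).Perm (j :: (List.range' 1 (j - 1) ++ List.range' (j + 1) (n - j))) := by
        refine hperm2.trans ?_
        rw [hsplit]
        exact List.perm_middle
      exact h3.cons_inv
    have hmap : (List.range' 1 (j - 1) ++ List.range' (j + 1) (n - j)).map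
        (fun m => if j < m then m - 1 else m) =
        List.range' 1 (j - 1) ++ List.range' j (n - j) := by
      rw [List.map_append]
      congr 1
      · rw [List.map_congr_left (fun x hx => ?_), List.map_id]
        rw [List.mem_range'] at hx
        simp only [id_eq]
        rw [if_neg (by omega)]
      · rw [List.map_congr_left (g := fun x => x - 1) (fun x hx => ?_)]
        · exact map_pred_range' (n - j) j
        · rw [List.mem_range'] at hx
          rw [if_pos (by omega)]
    have hjoin : List.range' 1 (j - 1) ++ List.range' j (n - j) = List.range' 1 (n - 1) := by
      have h2 := List.range'_append (s := 1) (m := j - 1) (n := n - j) (step := 1)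
      rw [show 1 + 1 * (j - 1) = j by omega] at h2
      rw [show j - 1 + (n - j) = n - 1 by omega] at h2
      exact h2
    show ((unshift j s).labelList).Perm (List.range' 1 (n - 1))
    rw [unshift, labelList_relabel]
    rw [← hjoin, ← hmap]
    exact hsperm.map _

end YuleAux

namespace YuleAux

/-! ### Enumerating the valid ungrafting choices of a tree -/

def choices : PTree → List (ℕ × Bool × List Bool)
  | .leaf => []
  | .node m l r =>
      ((if l = .leaf then [(m, true, ([] : List Bool))] else []) ++
       (if r = .leaf then [(m, false, ([] : List Bool))] else [])) ++
      ((choices l).map (fun d => (d.1, d.2.1, false :: d.2.2)) ++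
       (choices r).map (fun d => (d.1, d.2.1, true :: d.2.2)))

lemma choices_length : ∀ t : PTree, (choices t).length + (if t = .leaf then 1 else 0) = t.leaves
  | .leaf => rfl
  | .node m l r => by
      have hl := choices_length l
      have hr := choices_length r
      simp only [choices, PTree.leaves, List.length_append, List.length_map,
        if_neg (by simp : (PTree.node m l r) ≠ .leaf)]
      have h1 : (if l = PTree.leaf then [(m, true, ([] : List Bool))] else []).length
          = if l = PTree.leaf then 1 else 0 := by split <;> rfl
      have h2 : (if r = PTree.leaf then [(m, false, ([] : List Bool))] else []).length
          = if r = PTree.leaf then 1 else 0 := by split <;> rfl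
      rw [h1, h2]
      omega

lemma mem_choices_label : ∀ (t : PTree) (d : ℕ × Bool × List Bool),
    d ∈ choices t → d.1 ∈ t.labelList
  | .leaf, d, hd => by simp [choices] at hd
  | .node m l r, d, hd => by
      simp only [choices, List.mem_append, List.mem_map] at hd
      simp only [PTree.labelList, List.mem_cons, List.mem_append]
      rcases hd with (h | h) | (h | h)
      · left; split at h <;> simp at h <;> simp [h]
      · left; split at h <;> simp at h <;> simp [h]
      · obtain ⟨d', hd', rfl⟩ := h
        exact Or.inr (Or.inl (mem_choices_label l d' hd'))
      · obtain ⟨d', hd', rfl⟩ := h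
        exact Or.inr (Or.inr (mem_choices_label r d' hd'))

lemma mem_choices_of_delAt : ∀ (t : PTree) (j : ℕ) (χ : Bool) (p : List Bool) (s : PTree),
    delAt j χ t p = some s → (j, χ, p) ∈ choices t := by
  intro t
  induction t with
  | leaf => intro j χ p s h; cases p <;> simp [delAt] at h
  | node m l r ihl ihr =>
      intro j χ p s h
      cases p with
      | nil =>
          obtain ⟨hT, -⟩ := delAt_nil_inv h
          simp only [choices, List.mem_append]
          left
          cases χ with
          | true =>
              simp only [graftNode, if_pos rfl] at hT
              obtain ⟨rfl, rfl, rfl⟩ : m = j ∧ l = .leaf ∧ r = s := by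
                injection hT with a b c; exact ⟨a, b, c⟩
              simp
          | false =>
              simp only [graftNode, Bool.false_eq_true, if_neg (by simp : ¬False)] at hT
              obtain ⟨rfl, rfl, rfl⟩ : m = j ∧ l = s ∧ r = .leaf := by
                injection hT with a b c; exact ⟨a, b, c⟩
              simp
      | cons b p =>
          cases b with
          | false =>
              obtain ⟨m', l', r', x', hT, hs, hm, hdel⟩ := delAt_cons_false_inv h
              obtain ⟨rfl, rfl, rfl⟩ : m = m' ∧ l = l' ∧ r = r' := by
                injection hT with a b c; exact ⟨a, b, c⟩
              simp only [choices, List.mem_append, List.mem_map]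
              right; left
              exact ⟨(j, χ, p), ihl j χ p x' hdel, rfl⟩
          | true =>
              obtain ⟨m', l', r', x', hT, hs, hm, hdel⟩ := delAt_cons_true_inv h
              obtain ⟨rfl, rfl, rfl⟩ : m = m' ∧ l = l' ∧ r = r' := by
                injection hT with a b c; exact ⟨a, b, c⟩
              simp only [choices, List.mem_append, List.mem_map]
              right; right
              exact ⟨(j, χ, p), ihr j χ p x' hdel, rfl⟩

lemma delAt_isSome_of_mem_choices : ∀ (t : PTree) (a : ℕ), t.incrFrom a →
    ∀ (j : ℕ) (χ : Bool) (p : List Bool), (j, χ, p) ∈ choices t →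
      (delAt j χ t p).isSome := by
  intro t
  induction t with
  | leaf => intro a _ j χ p h; simp [choices] at h
  | node m l r ihl ihr =>
      intro a hI j χ p h
      simp only [choices, List.mem_append, List.mem_map] at h
      rcases h with (h | h) | (h | h)
      · split at h
        · simp only [List.mem_singleton, Prod.mk.injEq] at h
          obtain ⟨rfl, rfl, rfl⟩ := h
          subst ‹l = PTree.leaf›
          simp [delAt, rootGT_of_incrFrom hI.2.2]
        · simp at h
      · split at h
        · simp only [List.mem_singleton, Prod.mk.injEq] at h
          obtain ⟨rfl, rfl, rfl⟩ := h
          subst ‹r = PTree.leaf›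
          simp [delAt, rootGT_of_incrFrom hI.2.1]
        · simp at h
      · obtain ⟨⟨j', χ', p'⟩, hd', he⟩ := h
        injection he with e1 e2; injection e2 with e2 e3
        subst e1; subst e2; subst e3
        have hmj : m < j' := incrFrom_lt_of_mem hI.2.1 (mem_choices_label l _ hd')
        have := ihl m hI.2.1 j' χ' p' hd'
        rw [Option.isSome_iff_exists] at this ⊢
        obtain ⟨x, hx⟩ := this
        exact ⟨.node m x r, by simp [delAt, hmj, hx]⟩
      · obtain ⟨⟨j', χ', p'⟩, hd', he⟩ := h
        injection he with e1 e2; injection e2 with e2 e3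
        subst e1; subst e2; subst e3
        have hmj : m < j' := incrFrom_lt_of_mem hI.2.2 (mem_choices_label r _ hd')
        have := ihr m hI.2.2 j' χ' p' hd'
        rw [Option.isSome_iff_exists] at this ⊢
        obtain ⟨x, hx⟩ := this
        exact ⟨.node m l x, by simp [delAt, hmj, hx]⟩

lemma choices_nodup : ∀ t : PTree, (choices t).Nodup
  | .leaf => List.nodup_nil
  | .node m l r => by
      have hl := choices_nodup l
      have hr := choices_nodup r
      simp only [choices]
      refine List.Nodup.append (List.Nodup.append ?_ ?_ ?_) (List.Nodup.append ?_ ?_ ?_) ?_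
      · split <;> simp
      · split <;> simp
      · intro d h1 h2
        split at h1 <;> split at h2 <;> simp_all
      · exact hl.map (fun d d' h => by
          simpa [Prod.ext_iff] using h)
      · exact hr.map (fun d d' h => by
          simpa [Prod.ext_iff] using h)
      · intro d h1 h2
        simp only [List.mem_map] at h1 h2
        obtain ⟨d1, -, rfl⟩ := h1
        obtain ⟨d2, -, he⟩ := h2
        simp [Prod.ext_iff] at he
      · intro d h1 h2
        simp only [List.mem_append, List.mem_map] at h1 h2
        rcases h2 with ⟨d1, -, rfl⟩ | ⟨d1, -, rfl⟩ <;>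
          rcases h1 with h1 | h1 <;> split at h1 <;> simp_all

end YuleAux

namespace YuleAux

abbrev Choice := ℕ × Bool × List Bool

lemma runGraft_succ (m : ℕ) (c : Fin (m + 1) → Choice) :
    runGraft (m + 1) c = (runGraft m (Fin.init c)).bind
      (fun t => graft t (c (Fin.last m)).1 (c (Fin.last m)).2.1 (c (Fin.last m)).2.2) := rfl

lemma leaf_of_leaves_one : ∀ {t : PTree}, t.leaves = 1 → t = .leaf
  | .leaf, _ => rfl
  | .node _ l r, h => by
      have h1 := leaves_pos l
      have h2 := leaves_pos r
      simp only [PTree.leaves] at h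
      omega

/-- The number of grafting histories of length `m` producing a given OBIT of size `m+1`
is `(m+1)!`. -/
lemma histCount (m : ℕ) : ∀ (T : PTree), IsOBIT (m + 1) T →
    Nat.card {c : Fin m → Choice // runGraft m c = some T} = Nat.factorial (m + 1) := by
  induction m with
  | zero =>
      intro T hT
      obtain rfl : T = .leaf := leaf_of_leaves_one hT.1
      have : ∀ c : Fin 0 → Choice, runGraft 0 c = some PTree.leaf := fun _ => rfl
      rw [Nat.card_congr (Equiv.subtypeUnivEquiv this)]
      simp [Nat.card_eq_fintype_card]
  | succ m ih =>
      intro T hT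
      obtain ⟨hlv, hincr, hlab⟩ := hT
      have hnd : T.labelList.Nodup := hlab.nodup_iff.mpr (List.nodup_range')
      have hbound : ∀ x ∈ T.labelList, 1 ≤ x ∧ x < T.leaves := by
        intro x hx
        have := hlab.mem_iff.mp hx
        rw [List.mem_range'] at this
        obtain ⟨i, hi, rfl⟩ := this
        omega
      -- the tree obtained by ungrafting with choice `d`
      set F : Choice → PTree :=
        fun d => unshift d.1 ((delAt d.1 d.2.1 T d.2.2).getD PTree.leaf) with hF
      have hdel_of_mem : ∀ d : Choice, d ∈ choices T →
          delAt d.1 d.2.1 T d.2.2 = some ((delAt d.1 d.2.1 T d.2.2).getD PTree.leaf) := by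
        intro ⟨j, χ, p⟩ hd
        have := delAt_isSome_of_mem_choices T 0 hincr j χ p hd
        rw [Option.isSome_iff_exists] at this
        obtain ⟨s, hs⟩ := this
        simp [hs]
      have hgraft_of_mem : ∀ d : Choice, d ∈ choices T →
          graft (F d) d.1 d.2.1 d.2.2 = some T := by
        intro d hd
        rw [graft_eq_some_iff hnd hbound, hdel_of_mem d hd, Option.map_some]
      have hmem_of_graft : ∀ (t : PTree) (d : Choice),
          graft t d.1 d.2.1 d.2.2 = some T → d ∈ choices T ∧ t = F d := by
        intro t d h
        rw [graft_eq_some_iff hnd hbound] at h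
        rw [Option.map_eq_some_iff] at h
        obtain ⟨s, hs, rfl⟩ := h
        refine ⟨mem_choices_of_delAt T d.1 d.2.1 d.2.2 s hs, ?_⟩
        rw [hF]
        simp [hs]
      -- each ungrafted tree is an OBIT of size m+1
      have hOBIT : ∀ d : Choice, d ∈ choices T → IsOBIT (m + 1) (F d) := by
        intro d hd
        exact isOBIT_unshift_delAt (Nat.le_add_left 1 m)
          ⟨by rw [hlv], hincr, hlab⟩ (hdel_of_mem d hd)
      -- the equivalence with pairs (shorter history, last choice)
      have e1 : {c : Fin (m + 1) → Choice // runGraft (m + 1) c = some T} ≃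
          {cd : (Fin m → Choice) × Choice //
            (runGraft m cd.1).bind
              (fun t => graft t cd.2.1 cd.2.2.1 cd.2.2.2) = some T} :=
        { toFun := fun c => ⟨(Fin.init c.1, c.1 (Fin.last m)), by
            rw [← runGraft_succ]; exact c.2⟩
          invFun := fun cd => ⟨Fin.snoc cd.1.1 cd.1.2, by
            rw [runGraft_succ]
            simp only [Fin.init_snoc, Fin.snoc_last]
            exact cd.2⟩
          left_inv := fun c => Subtype.ext (Fin.snoc_init_self c.1)
          right_inv := fun cd => Subtype.ext (by
            simp only [Fin.init_snoc, Fin.snoc_last]) }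
      -- the equivalence with a sigma type
      have e2 : {cd : (Fin m → Choice) × Choice //
            (runGraft m cd.1).bind
              (fun t => graft t cd.2.1 cd.2.2.1 cd.2.2.2) = some T} ≃
          Σ e : {d : Choice // d ∈ choices T},
            {c : Fin m → Choice // runGraft m c = some (F e.1)} :=
        { toFun := fun cd => ⟨⟨cd.1.2, by
              obtain ⟨t, ht, hg⟩ := Option.bind_eq_some_iff.mp cd.2
              exact (hmem_of_graft t cd.1.2 hg).1⟩,
            ⟨cd.1.1, by
              obtain ⟨t, ht, hg⟩ := Option.bind_eq_some_iff.mp cd.2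
              rw [(hmem_of_graft t cd.1.2 hg).2] at ht
              exact ht⟩⟩
          invFun := fun e => ⟨(e.2.1, e.1.1), by
              rw [Option.bind_eq_some_iff]
              exact ⟨F e.1.1, e.2.2, hgraft_of_mem e.1.1 e.1.2⟩⟩
          left_inv := fun cd => rfl
          right_inv := fun e => rfl }
      rw [Nat.card_congr (e1.trans e2)]
      -- finiteness of the fibers
      have hfib : ∀ e : {d : Choice // d ∈ choices T},
          Nat.card {c : Fin m → Choice // runGraft m c = some (F e.1)} =
            Nat.factorial (m + 1) := fun e => ih (F e.1) (hOBIT e.1 e.2)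
      have hfin : ∀ e : {d : Choice // d ∈ choices T},
          Finite {c : Fin m → Choice // runGraft m c = some (F e.1)} := by
        intro e
        refine Nat.finite_of_card_ne_zero ?_
        rw [hfib e]
        exact Nat.factorial_ne_zero _
      have hindex : Finite {d : Choice // d ∈ choices T} := by
        refine Finite.of_equiv {d : Choice // d ∈ (choices T).toFinset} ?_
        exact Equiv.subtypeEquivRight (fun d => List.mem_toFinset)
      haveI := hindex
      haveI := hfin
      haveI : Fintype {d : Choice // d ∈ choices T} := Fintype.ofFinite _
      haveI : ∀ e : {d : Choice // d ∈ choices T},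
          Fintype {c : Fin m → Choice // runGraft m c = some (F e.1)} :=
        fun e => Fintype.ofFinite _
      rw [Nat.card_eq_fintype_card, Fintype.card_sigma]
      have : ∀ e : {d : Choice // d ∈ choices T},
          Fintype.card {c : Fin m → Choice // runGraft m c = some (F e.1)} =
            Nat.factorial (m + 1) := by
        intro e
        rw [Fintype.card_eq_nat_card, hfib e]
      rw [Finset.sum_congr rfl (fun e _ => this e), Finset.sum_const, Finset.card_univ]
      have hcard : Fintype.card {d : Choice // d ∈ choices T} = m + 2 := by
        rw [Fintype.card_eq_nat_card]
        rw [Nat.card_congr (Equiv.subtypeEquivRight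
          (fun d => (List.mem_toFinset (l := choices T)).symm))]
        rw [Nat.card_eq_finsetCard]
        rw [List.toFinset_card_of_nodup (choices_nodup T)]
        have hne : T ≠ .leaf := by
          intro h
          rw [h] at hlv
          simp [PTree.leaves] at hlv
        have := choices_length T
        rw [if_neg hne] at this
        omega
      rw [hcard, smul_eq_mul]
      rw [Nat.factorial_succ (m + 1)]
end YuleAux

namespace YuleAux

lemma prodIcc (m : ℕ) :
    (∏ i ∈ Finset.Icc 1 m, ((i : ℚ) * ((i : ℚ) + 1))) =
      (Nat.factorial m : ℚ) * (Nat.factorial (m + 1) : ℚ) := by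
  induction m with
  | zero => simp
  | succ m ihm =>
      rw [Finset.prod_Icc_succ_top (Nat.le_add_left 1 m), ihm,
        Nat.factorial_succ (m + 1), Nat.factorial_succ m]
      push_cast
      ring

end YuleAux

/-- For every `n ≥ 1`, the tree obtained from the single-leaf tree by `n-1` successive
random grafting operations — at each step on a tree of size `i` the `i(i+1)` valid choices
are equally likely — is uniformly distributed on `𝒯_n`: every `T ∈ 𝒯_n` arises with
probability `1/(n-1)!`, i.e. the number of grafting histories producing `T`, divided by the
total number `∏_{i=1}^{n-1} i(i+1)` of grafting histories, equals `1/(n-1)!`. -/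
theorem grafting_yields_uniform_yule_tree (n : ℕ) (hn : 1 ≤ n)
    (T : PTree) (hT : IsOBIT n T) :
    ((Nat.card {c : Fin (n - 1) → ℕ × Bool × List Bool //
        runGraft (n - 1) c = some T} : ℚ) /
        (∏ i ∈ Finset.Icc 1 (n - 1), ((i : ℚ) * ((i : ℚ) + 1))))
      = 1 / (Nat.factorial (n - 1) : ℚ) := by
  obtain ⟨m, rfl⟩ : ∃ m, n = m + 1 := ⟨n - 1, by omega⟩
  show ((Nat.card {c : Fin m → ℕ × Bool × List Bool // runGraft m c = some T} : ℚ) /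
      (∏ i ∈ Finset.Icc 1 m, ((i : ℚ) * ((i : ℚ) + 1)))) = 1 / (Nat.factorial m : ℚ)
  rw [YuleAux.histCount m T hT, YuleAux.prodIcc m]
  have hm : (Nat.factorial m : ℚ) ≠ 0 := Nat.cast_ne_zero.mpr (Nat.factorial_ne_zero m)
  have hm1 : (Nat.factorial (m + 1) : ℚ) ≠ 0 := Nat.cast_ne_zero.mpr (Nat.factorial_ne_zero (m + 1))
  field_simp
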